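/- arXiv:2303.10832 — 2 statements merged into one kernel-verified Lean document; each statement's English description precedes it below -/
import Mathlib

section
/- For networked housing markets on a chain with n ≥ 3 agents, there is no mechanism (a map from reported profiles to allocations) that is simultaneously individually rational, strategy-proof, and Pareto efficient, where agents report both a preference over houses and a subset of their true children, without restricting the preference domain. Concretely: in the chain market o→1→2→3 with preferences h_3 ≻_1 h_2 ≻_1 h_1, h_1 ≻_2 h_2 ≻_2 h_3, h_1 ≻_3 h_3 ≻_3 h_2, any mechanism that outputs an individually rational and Pareto efficient allocation on every (sub)market reachable by children-misreports admits a profitable deviation for some agent, hence is not strategy-proof. -/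
/-- A reported preference is a ranking: `σ k` is the `k`-th most preferred
house.  `PrefLt σ a b` means house `a` is strictly preferred to house `b`. -/
def PrefLt (σ : Equiv.Perm (Fin 3)) (a b : Fin 3) : Prop := σ.symm a < σ.symm b

/-- A report profile on the chain o → 1 → 2 → 3: each agent reports a strict
preference over the three houses and whether they invite their child
(agent 3 has no child; its Bool is irrelevant). -/
structure NHMRep where
  pref : Fin 3 → Equiv.Perm (Fin 3)
  inv : Fin 3 → Bool

/-- Agent `i` is present iff every agent strictly before it on the chain
invites its child. -/
def NHMPresent (R : NHMRep) (i : Fin 3) : Prop := ∀ j : Fin 3, j < i → R.inv j = true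

/-- A mechanism allocates the present agents' houses bijectively among the
present agents and leaves absent agents with their own houses. -/
def NHMFeasible (M : NHMRep → Fin 3 → Fin 3) : Prop :=
  ∀ R, Set.BijOn (M R) {i | NHMPresent R i} {i | NHMPresent R i} ∧
    ∀ i, ¬ NHMPresent R i → M R i = i

/-- Individual rationality at every report profile. -/
def NHMIR (M : NHMRep → Fin 3 → Fin 3) : Prop :=
  ∀ R i, NHMPresent R i → (M R i = i ∨ PrefLt (R.pref i) (M R i) i)

/-- Pareto efficiency at every report profile. -/
def NHMPE (M : NHMRep → Fin 3 → Fin 3) : Prop :=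
  ∀ R, ¬ ∃ y : Fin 3 → Fin 3,
    Set.BijOn y {i | NHMPresent R i} {i | NHMPresent R i} ∧
    (∀ i, NHMPresent R i → (y i = M R i ∨ PrefLt (R.pref i) (y i) (M R i))) ∧
    (∃ j, NHMPresent R j ∧ PrefLt (R.pref j) (y j) (M R j))

/-- Strategy-proofness at the true profile `θ`: no agent can obtain a house
strictly preferred (by its true preference) to its truthful outcome by
unilaterally misreporting its preference and/or dropping its child. -/
def NHMSP (M : NHMRep → Fin 3 → Fin 3) (θ : NHMRep) : Prop :=
  ∀ (i : Fin 3) (p : Equiv.Perm (Fin 3)) (b : Bool),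
    ¬ PrefLt (θ.pref i)
        (M ⟨Function.update θ.pref i p, Function.update θ.inv i b⟩ i)
        (M θ i)

/-- The true profile: all agents invite, with preferences
h₃ ≻₁ h₂ ≻₁ h₁, h₁ ≻₂ h₂ ≻₂ h₃, h₁ ≻₃ h₃ ≻₃ h₂. -/
def θtrue : NHMRep :=
  ⟨![Equiv.swap 0 2, 1, Equiv.swap 1 2], fun _ => true⟩

/-!
Agent and house `i : Fin 3` are the paper's agent and house `i + 1`.

At the true profile the individually rational allocations are the identity and the swaps
`h₁ ↔ h₂` and `h₁ ↔ h₃`; the identity is dominated, so the mechanism picks a swap. If it swaps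
`h₁ ↔ h₂`, agent 1 reports `h₃ ≻ h₁ ≻ h₂`: then `h₂` is unacceptable to it, the only efficient
individually rational allocation is the swap `h₁ ↔ h₃`, and agent 1 gains. If it swaps
`h₁ ↔ h₃`, agent 2 does not invite agent 3: in the remaining market of agents 1 and 2,
efficiency forces the swap `h₁ ↔ h₂`, and agent 2 gains.
-/

instance (σ : Equiv.Perm (Fin 3)) (a b : Fin 3) : Decidable (PrefLt σ a b) :=
  inferInstanceAs (Decidable (σ.symm a < σ.symm b))

instance (R : NHMRep) : DecidablePred (NHMPresent R) := fun i =>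
  inferInstanceAs (Decidable (∀ j : Fin 3, j < i → R.inv j = true))

instance (R : NHMRep) (f : Fin 3 → Fin 3) :
    Decidable (Set.BijOn f {i | NHMPresent R i} {i | NHMPresent R i}) :=
  decidable_of_iff
    (Set.BijOn f ↑(Finset.univ.filter (NHMPresent R)) ↑(Finset.univ.filter (NHMPresent R)))
    (by simp)

namespace NHMRep

variable (R : NHMRep)

def IsFeasible (f : Fin 3 → Fin 3) : Prop :=
  Set.BijOn f {i | NHMPresent R i} {i | NHMPresent R i} ∧ ∀ i, ¬ NHMPresent R i → f i = i

def IsIR (f : Fin 3 → Fin 3) : Prop :=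
  ∀ i, NHMPresent R i → (f i = i ∨ PrefLt (R.pref i) (f i) i)

def ParetoImproves (y x : Fin 3 → Fin 3) : Prop :=
  Set.BijOn y {i | NHMPresent R i} {i | NHMPresent R i} ∧
    (∀ i, NHMPresent R i → (y i = x i ∨ PrefLt (R.pref i) (y i) (x i))) ∧
    (∃ j, NHMPresent R j ∧ PrefLt (R.pref j) (y j) (x j))

def IsAdmissible (f : Fin 3 → Fin 3) : Prop :=
  R.IsFeasible f ∧ R.IsIR f ∧ ∀ y, ¬ R.ParetoImproves y f

def deviate (i : Fin 3) (p : Equiv.Perm (Fin 3)) (b : Bool) : NHMRep :=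
  ⟨Function.update R.pref i p, Function.update R.inv i b⟩

instance (f : Fin 3 → Fin 3) : Decidable (R.IsFeasible f) := by
  unfold IsFeasible; infer_instance

instance (f : Fin 3 → Fin 3) : Decidable (R.IsIR f) := by
  unfold IsIR; infer_instance

instance (y x : Fin 3 → Fin 3) : Decidable (R.ParetoImproves y x) := by
  unfold ParetoImproves; infer_instance

variable {R}

theorem IsAdmissible.ne_of_paretoImproves {f x y : Fin 3 → Fin 3} (hf : R.IsAdmissible f)
    (h : R.ParetoImproves y x) : f ≠ x := by
  rintro rfl
  exact hf.2.2 y h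

end NHMRep

open NHMRep

theorem isAdmissible_of_mechanism {M : NHMRep → Fin 3 → Fin 3} (hF : NHMFeasible M)
    (hIR : NHMIR M) (hPE : NHMPE M) (R : NHMRep) : R.IsAdmissible (M R) :=
  ⟨hF R, hIR R, fun y hy => hPE R ⟨y, hy⟩⟩

theorem NHMSP.not_prefLt_deviate {M : NHMRep → Fin 3 → Fin 3} {θ : NHMRep} (h : NHMSP M θ)
    (i : Fin 3) (p : Equiv.Perm (Fin 3)) (b : Bool) :
    ¬ PrefLt (θ.pref i) (M (θ.deviate i p b) i) (M θ i) :=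
  h i p b

theorem θtrue_isFeasible_and_isIR_iff :
    ∀ f, θtrue.IsFeasible f ∧ θtrue.IsIR f ↔ f = id ∨ f = ![1, 0, 2] ∨ f = ![2, 1, 0] := by
  decide

theorem θtrue_isAdmissible {f : Fin 3 → Fin 3} (hf : θtrue.IsAdmissible f) :
    f = ![1, 0, 2] ∨ f = ![2, 1, 0] := by
  obtain h | h | h := (θtrue_isFeasible_and_isIR_iff f).mp ⟨hf.1, hf.2.1⟩
  · exact absurd h (hf.ne_of_paretoImproves (y := ![1, 0, 2]) (by decide))
  · exact Or.inl h
  · exact Or.inr h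

/-- The ranking `h₃ ≻ h₁ ≻ h₂`. -/
def misreport : Equiv.Perm (Fin 3) := Equiv.swap 0 1 * Equiv.swap 0 2

theorem misreport_isFeasible_and_isIR_iff :
    ∀ f, (θtrue.deviate 0 misreport true).IsFeasible f ∧ (θtrue.deviate 0 misreport true).IsIR f ↔
      f = id ∨ f = ![2, 1, 0] := by
  decide

theorem misreport_isAdmissible {f : Fin 3 → Fin 3}
    (hf : (θtrue.deviate 0 misreport true).IsAdmissible f) : f = ![2, 1, 0] := by
  obtain h | h := (misreport_isFeasible_and_isIR_iff f).mp ⟨hf.1, hf.2.1⟩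
  · exact absurd h (hf.ne_of_paretoImproves (y := ![2, 1, 0]) (by decide))
  · exact h

theorem withholdInvite_isFeasible_and_isIR_iff :
    ∀ f, (θtrue.deviate 1 (θtrue.pref 1) false).IsFeasible f ∧
      (θtrue.deviate 1 (θtrue.pref 1) false).IsIR f ↔ f = id ∨ f = ![1, 0, 2] := by
  decide

theorem withholdInvite_isAdmissible {f : Fin 3 → Fin 3}
    (hf : (θtrue.deviate 1 (θtrue.pref 1) false).IsAdmissible f) : f = ![1, 0, 2] := by
  obtain h | h := (withholdInvite_isFeasible_and_isIR_iff f).mp ⟨hf.1, hf.2.1⟩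
  · exact absurd h (hf.ne_of_paretoImproves (y := ![1, 0, 2]) (by decide))
  · exact h

/-- impossibility — no mechanism on the 3-agent chain networked
housing market is simultaneously feasible, individually rational, Pareto
efficient (at every reachable report profile) and strategy-proof at the true
profile above. -/
theorem no_IR_SP_PE_mechanism_on_chain :
    ¬ ∃ M : NHMRep → Fin 3 → Fin 3, NHMFeasible M ∧ NHMIR M ∧ NHMPE M ∧ NHMSP M θtrue := by
  rintro ⟨M, hF, hIR, hPE, hSP⟩
  have hM := isAdmissible_of_mechanism hF hIR hPE
  rcases θtrue_isAdmissible (hM θtrue) with htrue | htrue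
  · apply hSP.not_prefLt_deviate 0 misreport true
    rw [htrue, misreport_isAdmissible (hM _)]
    decide
  · apply hSP.not_prefLt_deviate 1 (θtrue.pref 1) false
    rw [htrue, withholdInvite_isAdmissible (hM _)]
    decide
end

section
/- The allocation x = (h_7, h_8, h_6, h_4, h_2, h_1, h_3, h_10, h_9, h_5) produced by TTCD in the 10-agent example is not Pareto efficient: swapping the houses of agents 4 and 9, i.e. the allocation y with y(4)=h_9, y(9)=h_4 and y = x elsewhere, Pareto dominates x. -/
/-- the TTCD allocation x = (h₇,h₈,h₆,h₄,h₂,h₁,h₃,h₁₀,h₉,h₅) of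
the 10-agent example (agents/houses indexed 0–9) is not Pareto efficient: the
allocation y that swaps the houses of agents 4 and 9 (y(4) = h₉, y(9) = h₄,
y = x elsewhere) Pareto dominates x.  Agent 4's preference: h₉ ≻ h₃ ≻ h₄;
agent 9's preference: h₃ ≻ h₄ ≻ h₂ ≻ h₇ ≻ h₉. -/
theorem ttcd_example_not_pareto_efficient
    (pref : Fin 10 → Fin 10 → Fin 10 → Prop)
    (hord : ∀ i, IsStrictTotalOrder (Fin 10) (pref i))
    (a4a : pref 3 8 2) (a4b : pref 3 2 3)
    (a9a : pref 8 2 3) (a9b : pref 8 3 1) (a9c : pref 8 1 6) (a9d : pref 8 6 8) :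
    (∀ i : Fin 10,
        (![6,7,5,8,1,0,2,9,3,4] : Fin 10 → Fin 10) i =
          (![6,7,5,3,1,0,2,9,8,4] : Fin 10 → Fin 10) i ∨
        pref i ((![6,7,5,8,1,0,2,9,3,4] : Fin 10 → Fin 10) i)
          ((![6,7,5,3,1,0,2,9,8,4] : Fin 10 → Fin 10) i)) ∧
    (∃ j : Fin 10,
        pref j ((![6,7,5,8,1,0,2,9,3,4] : Fin 10 → Fin 10) j)
          ((![6,7,5,3,1,0,2,9,8,4] : Fin 10 → Fin 10) j)) := by
  have t3 : Transitive (pref 3) := (hord 3).trans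
  have t8 : Transitive (pref 8) := (hord 8).trans
  have h3 : pref 3 8 3 := t3 a4a a4b
  have h8 : pref 8 3 8 := t8 a9b (t8 a9c a9d)
  refine ⟨fun i => ?_, ⟨3, h3⟩⟩
  fin_cases i <;> first | exact Or.inl (by decide) | exact Or.inr h3 | exact Or.inr h8
end
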